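/- arXiv:1012.1585 — 4 statements merged into one kernel-verified Lean document; each statement's English description precedes it below -/
import Mathlib

section
/- For s > 0 and integers k ≥ 0, the integrals λ_k = ∫_ℝ ((i−u)/√(1+u²))^{2k} · (1+u²)^{−(1/2+s)} du satisfy the recursion λ_{k+1} = ((k + 1/2 − s)/(k + 1/2 + s)) · λ_k. -/
/-!
Squaring `(i - u) / √(1 + u²)` gives the unimodular Cayley transform `z(u) = (u - i) / (u + i)`,
so `λ_k = ∫ z^k w` with `w = (1 + u²)^p`, `p = -(1/2 + s)`. The function `F = z^(n+1) (u + i) w`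
has derivative `(n + 1 + p) z^n w + (p - n) z^(n+1) w` and modulus `(1 + u²)^(p + 1/2)`, which
tends to `0` at `±∞` when `p < -1/2`. Integrating `F'` over `ℝ` therefore gives
`(n - p) λ_{n+1} = (n + 1 + p) λ_n`.
-/

open MeasureTheory Complex Filter Topology

noncomputable def cayley (u : ℝ) : ℂ := (u - I) / (u + I)

lemma ofReal_add_I_ne_zero (u : ℝ) : (u : ℂ) + I ≠ 0 := fun h => by
  simpa using congrArg im h

lemma ofReal_sub_I_ne_zero (u : ℝ) : (u : ℂ) - I ≠ 0 := fun h => by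
  simpa using congrArg im h

lemma one_add_ofReal_sq (u : ℝ) : 1 + (u : ℂ) ^ 2 = (u + I) * (u - I) := by
  linear_combination I_sq

lemma norm_ofReal_add_I (u : ℝ) : ‖(u : ℂ) + I‖ = √(1 + u ^ 2) := by
  simpa [add_comm] using norm_add_mul_I u 1

lemma norm_ofReal_sub_I (u : ℝ) : ‖(u : ℂ) - I‖ = √(1 + u ^ 2) := by
  simpa [add_comm, sub_eq_add_neg] using norm_add_mul_I u (-1)

lemma norm_cayley (u : ℝ) : ‖cayley u‖ = 1 := by
  rw [cayley, norm_div, norm_ofReal_sub_I, norm_ofReal_add_I,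
    div_self (Real.sqrt_pos.2 (by positivity)).ne']

lemma continuous_cayley : Continuous cayley :=
  (continuous_ofReal.sub continuous_const).div (continuous_ofReal.add continuous_const)
    ofReal_add_I_ne_zero

lemma hasDerivAt_cayley (u : ℝ) : HasDerivAt cayley (2 * I / (u + I) ^ 2) u := by
  have h := ((hasDerivAt_id' (x := (u : ℂ))).sub_const I).div
    ((hasDerivAt_id' (x := (u : ℂ))).add_const I) (ofReal_add_I_ne_zero u)
  exact h.comp_ofReal.congr_deriv (by ring)

lemma I_sub_div_sqrt_sq (u : ℝ) : ((I - u) / (√(1 + u ^ 2) : ℂ)) ^ 2 = cayley u := by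
  have hsq : ((√(1 + u ^ 2) : ℝ) : ℂ) ^ 2 = 1 + (u : ℂ) ^ 2 := by
    norm_cast
    exact Real.sq_sqrt (by positivity)
  rw [div_pow, hsq, one_add_ofReal_sq, cayley]
  field_simp [ofReal_add_I_ne_zero u, ofReal_sub_I_ne_zero u]
  ring

lemma integrable_one_add_sq_rpow {p : ℝ} (hp : p < -1 / 2) :
    Integrable fun u : ℝ => (1 + u ^ 2) ^ p := by
  have h := integrable_rpow_neg_one_add_norm_sq (E := ℝ) (μ := volume) (r := -2 * p)
    (by simp; linarith)
  convert h using 3 with u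
  · simp
  · ring

lemma hasDerivAt_one_add_sq_rpow (p u : ℝ) :
    HasDerivAt (fun u : ℝ => (1 + u ^ 2) ^ p) (p * (1 + u ^ 2) ^ (p - 1) * (2 * u)) u := by
  have h := ((hasDerivAt_pow 2 u).const_add 1).rpow_const (p := p) (Or.inl (by positivity))
  convert h using 1
  ring

lemma tendsto_one_add_sq_rpow_cocompact {p : ℝ} (hp : p < 0) :
    Tendsto (fun u : ℝ => (1 + u ^ 2) ^ p) (cocompact ℝ) (𝓝 0) := by
  have hbase : Tendsto (fun u : ℝ => 1 + u ^ 2) (cocompact ℝ) atTop := by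
    refine tendsto_atTop_add_const_left _ 1 ?_
    refine ((tendsto_pow_atTop two_ne_zero).comp tendsto_norm_cocompact_atTop).congr fun u => ?_
    simp
  refine ((tendsto_rpow_neg_atTop (neg_pos.2 hp)).comp hbase).congr fun u => ?_
  simp

lemma hasDerivAt_cayley_pow_succ_mul (n : ℕ) (p u : ℝ) :
    HasDerivAt (fun u : ℝ => cayley u ^ (n + 1) * (u + I) * ((1 + u ^ 2) ^ p : ℝ))
      ((n + 1 + p) * (cayley u ^ n * ((1 + u ^ 2) ^ p : ℝ)) +
        (p - n) * (cayley u ^ (n + 1) * ((1 + u ^ 2) ^ p : ℝ))) u := by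
  have hl : HasDerivAt (fun u : ℝ => (u : ℂ) + I) 1 u := (hasDerivAt_id u).ofReal_comp.add_const I
  have h := (((hasDerivAt_cayley u).pow (n + 1)).mul hl).mul
    (hasDerivAt_one_add_sq_rpow p u).ofReal_comp
  refine h.congr_deriv ?_
  rw [Real.rpow_sub (by positivity), Real.rpow_one]
  push_cast
  simp only [Pi.mul_apply, Pi.pow_apply, one_add_ofReal_sq, pow_succ (cayley u) n]
  generalize cayley u ^ n = zn
  rw [cayley]
  field_simp [ofReal_add_I_ne_zero u, ofReal_sub_I_ne_zero u]
  ring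

lemma norm_cayley_pow_succ_mul (n : ℕ) (p u : ℝ) :
    ‖cayley u ^ (n + 1) * (u + I) * ((1 + u ^ 2) ^ p : ℝ)‖ = (1 + u ^ 2) ^ (p + 1 / 2) := by
  have h1 : 0 < 1 + u ^ 2 := by positivity
  rw [norm_mul, norm_mul, norm_pow, norm_cayley, norm_ofReal_add_I, norm_real, Real.norm_eq_abs,
    abs_of_nonneg (by positivity), one_pow, one_mul, Real.sqrt_eq_rpow, ← Real.rpow_add h1,
    add_comm (1 / 2 : ℝ)]

noncomputable def cayleyMoment (p : ℝ) (n : ℕ) : ℂ :=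
  ∫ u : ℝ, cayley u ^ n * ((1 + u ^ 2) ^ p : ℝ)

lemma integrable_cayley_pow_mul {p : ℝ} (hp : p < -1 / 2) (n : ℕ) :
    Integrable fun u : ℝ => cayley u ^ n * ((1 + u ^ 2) ^ p : ℝ) := by
  refine (integrable_one_add_sq_rpow hp).mono' ?_ (Eventually.of_forall fun u => ?_)
  · exact ((continuous_cayley.pow n).mul
      (continuous_ofReal.comp ((continuous_const.add (continuous_pow 2)).rpow_const
        fun u => Or.inl (by positivity : (1 : ℝ) + u ^ 2 ≠ 0)))).aestronglyMeasurable
  · rw [norm_mul, norm_pow, norm_cayley, one_pow, one_mul, norm_real, Real.norm_eq_abs,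
      abs_of_nonneg (by positivity)]

theorem cayleyMoment_succ {p : ℝ} (hp : p < -1 / 2) (n : ℕ) :
    ((n : ℂ) - p) * cayleyMoment p (n + 1) = (n + 1 + p) * cayleyMoment p n := by
  have hF : Tendsto (fun u : ℝ => cayley u ^ (n + 1) * (u + I) * ((1 + u ^ 2) ^ p : ℝ))
      (cocompact ℝ) (𝓝 0) := by
    refine squeeze_zero_norm (fun u => (norm_cayley_pow_succ_mul n p u).le) ?_
    exact tendsto_one_add_sq_rpow_cocompact (by linarith)
  rw [cocompact_eq_atBot_atTop, tendsto_sup] at hF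
  have h := integral_of_hasDerivAt_of_tendsto (hasDerivAt_cayley_pow_succ_mul n p)
    (((integrable_cayley_pow_mul hp n).const_mul _).add
      ((integrable_cayley_pow_mul hp (n + 1)).const_mul _)) hF.1 hF.2
  rw [integral_add ((integrable_cayley_pow_mul hp n).const_mul _)
      ((integrable_cayley_pow_mul hp (n + 1)).const_mul _), integral_const_mul,
    integral_const_mul] at h
  unfold cayleyMoment
  linear_combination -h

/-- Recursion for the intertwining coefficients
`λ_k = ∫_ℝ ((i−u)/√(1+u²))^{2k} (1+u²)^{−(1/2+s)} du`. -/
theorem stmt_0 (s : ℝ) (hs : 0 < s) (k : ℕ) :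
    (∫ u : ℝ, ((Complex.I - (u : ℂ)) / (Real.sqrt (1 + u ^ 2) : ℂ)) ^ (2 * (k + 1)) *
        ((1 + u ^ 2) ^ (-(1 / 2 + s)) : ℝ)) =
      (((k : ℝ) + 1 / 2 - s) / ((k : ℝ) + 1 / 2 + s) : ℝ) *
        ∫ u : ℝ, ((Complex.I - (u : ℂ)) / (Real.sqrt (1 + u ^ 2) : ℂ)) ^ (2 * k) *
          ((1 + u ^ 2) ^ (-(1 / 2 + s)) : ℝ) := by
  simp_rw [pow_mul, I_sub_div_sqrt_sq]
  have hrec := cayleyMoment_succ (p := -(1 / 2 + s)) (by linarith) k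
  have hne : ((k + 1 / 2 + s : ℝ) : ℂ) ≠ 0 := ofReal_ne_zero.2 (by positivity)
  unfold cayleyMoment at hrec
  push_cast at hrec hne ⊢
  rw [div_mul_eq_mul_div, eq_div_iff hne]
  linear_combination hrec
end

section
/- Let H be a real Hilbert space with unit vector u, and define the bilinear form B(v₁ + t₁u, v₂ + t₂u) = t₁t₂ − ⟨v₁, v₂⟩ for v₁, v₂ ⊥ u. Then the set H∞ = {v ∈ H : B(v,v) = 1, B(v,u) > 0} with d(x,y) = arcosh(B(x,y)) is a metric space; in particular B(x,y) ≥ 1 for all x, y ∈ H∞, with equality iff x = y, and the triangle inequality holds. -/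
/-!
Writing `B x y = 2 ⟪x, u⟫ ⟪y, u⟫ - ⟪x, y⟫` makes `B` a symmetric bilinear form. For `y` on the
hyperboloid, Cauchy–Schwarz in `uᗮ` shows that `B` is negative definite on the `B`-orthogonal
complement of `y`. Since `x - y` lies in that complement when `B x y = 1 = B y y` and has
`B (x - y) (x - y) = 2 - 2 B x y`, this gives the equality case. For the triangle inequality, the
components `x - B x y • y` and `z - B y z • y` lie in the complement, and the reverse
Cauchy–Schwarz inequality for them reads
`B x z ≤ B x y B y z + sinh d(x, y) sinh d(y, z) = cosh (d(x, y) + d(y, z))`.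
-/

open scoped RealInnerProductSpace

/-- Inverse hyperbolic cosine. -/
noncomputable def arcosh (x : ℝ) : ℝ := Real.log (x + Real.sqrt (x ^ 2 - 1))

theorem arcosh_eq_real_arcosh (x : ℝ) : arcosh x = Real.arcosh x := rfl

theorem Real.arcosh_le_arcosh_add_arcosh {a b c : ℝ} (ha : 1 ≤ a) (hb : 1 ≤ b) (hc : 0 < c)
    (h : c ≤ a * b + √(a ^ 2 - 1) * √(b ^ 2 - 1)) :
    Real.arcosh c ≤ Real.arcosh a + Real.arcosh b := by
  have hcosh : cosh (arcosh a + arcosh b) = a * b + √(a ^ 2 - 1) * √(b ^ 2 - 1) := by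
    rw [cosh_add, cosh_arcosh ha, cosh_arcosh hb, sinh_arcosh ha, sinh_arcosh hb]
  calc arcosh c ≤ arcosh (cosh (arcosh a + arcosh b)) :=
        (arcosh_le_arcosh hc (cosh_pos _)).2 (hcosh ▸ h)
    _ = arcosh a + arcosh b := arcosh_cosh (add_nonneg (arcosh_nonneg ha) (arcosh_nonneg hb))

namespace LinearMap.BilinForm

variable {E : Type*} [AddCommGroup E] [Module ℝ E] {B : LinearMap.BilinForm ℝ E}

theorem sq_le_mul_of_apply_add_smul_nonpos (hB : B.IsSymm) {x z : E}
    (h : ∀ r : ℝ, B (x + r • z) (x + r • z) ≤ 0) : B x z ^ 2 ≤ B x x * B z z := by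
  have hd := discrim_le_zero (a := -B z z) (b := -2 * B x z) (c := -B x x) fun r => by
    have hr := h r
    simp only [map_add, map_smul, LinearMap.add_apply, LinearMap.smul_apply, smul_eq_mul,
      hB.eq z x] at hr
    linarith
  rw [discrim] at hd
  linarith

theorem eq_of_apply_eq_one (hB : B.IsSymm) {x y : E} (hx : B x x = 1) (hy : B y y = 1)
    (hxy : B x y = 1) (hdef : ∀ w, B w y = 0 → B w w = 0 → w = 0) : x = y :=
  sub_eq_zero.1 <| hdef _ (by simp [hxy, hy]) (by simp [hx, hy, hxy, hB.eq y x])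

theorem apply_le_mul_add_sqrt_mul_sqrt (hB : B.IsSymm) {x y z : E} (hx : B x x = 1)
    (hy : B y y = 1) (hz : B z z = 1) (hneg : ∀ w, B w y = 0 → B w w ≤ 0) :
    B x z ≤ B x y * B y z + √(B x y ^ 2 - 1) * √(B y z ^ 2 - 1) := by
  set x' := x - B x y • y
  set z' := z - B y z • y
  have hx'y : B x' y = 0 := by simp [x', hy]
  have hz'y : B z' y = 0 := by simp [z', hy, hB.eq z y]
  have hx'x' : B x' x' = 1 - B x y ^ 2 := by simp [x', hx, hy, hB.eq y x]; ring
  have hz'z' : B z' z' = 1 - B y z ^ 2 := by simp [z', hz, hy, hB.eq z y]; ring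
  have hx'z' : B x' z' = B x z - B x y * B y z := by simp [x', z', hy]; ring
  have hcs : B x' z' ^ 2 ≤ (B x y ^ 2 - 1) * (B y z ^ 2 - 1) := by
    have h := sq_le_mul_of_apply_add_smul_nonpos (x := x') (z := z') hB
      fun r => hneg _ (by simp [hx'y, hz'y])
    rw [hx'x', hz'z'] at h
    linarith
  have hxy : 0 ≤ B x y ^ 2 - 1 := by linarith [hneg x' hx'y]
  rw [← Real.sqrt_mul hxy]
  linarith [(le_abs_self _).trans (Real.abs_le_sqrt hcs)]

end LinearMap.BilinForm

section Lorentz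

variable {H : Type*} [NormedAddCommGroup H] [InnerProductSpace ℝ H]

/-- For a unit vector `u`, this is `t₁ t₂ - ⟪v₁, v₂⟫` on `v₁ + t₁ • u` and `v₂ + t₂ • u`
with `v₁, v₂ ⊥ u`. -/
noncomputable def lorentzForm (u : H) : LinearMap.BilinForm ℝ H :=
  LinearMap.mk₂ ℝ (fun x y => 2 * ⟪x, u⟫ * ⟪y, u⟫ - ⟪x, y⟫)
    (fun _ _ _ => by simp only [inner_add_left]; ring)
    (fun _ _ _ => by simp only [real_inner_smul_left, smul_eq_mul]; ring)
    (fun _ _ _ => by simp only [inner_add_left, inner_add_right]; ring)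
    (fun _ _ _ => by simp only [real_inner_smul_left, real_inner_smul_right, smul_eq_mul]; ring)

theorem lorentzForm_apply (u x y : H) : lorentzForm u x y = 2 * ⟪x, u⟫ * ⟪y, u⟫ - ⟪x, y⟫ := rfl

theorem isSymm_lorentzForm (u : H) : (lorentzForm u).IsSymm :=
  ⟨fun x y => by simp only [lorentzForm_apply, real_inner_comm x y]; ring⟩

variable {u : H}

theorem inner_sub_inner_smul_self (hu : ‖u‖ = 1) (x : H) : ⟪x - ⟪x, u⟫ • u, u⟫ = 0 := by
  simp [inner_sub_left, real_inner_smul_left, hu]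

theorem inner_sub_inner_smul_sub_inner_smul (hu : ‖u‖ = 1) (x y : H) :
    ⟪x - ⟪x, u⟫ • u, y - ⟪y, u⟫ • u⟫ = ⟪x, y⟫ - ⟪x, u⟫ * ⟪y, u⟫ := by
  simp [inner_sub_left, inner_sub_right, real_inner_smul_left, real_inner_smul_right, hu,
    real_inner_comm u y]

theorem lorentzForm_apply_eq (hu : ‖u‖ = 1) (x y : H) :
    lorentzForm u x y = ⟪x, u⟫ * ⟪y, u⟫ - ⟪x - ⟪x, u⟫ • u, y - ⟪y, u⟫ • u⟫ := by
  rw [inner_sub_inner_smul_sub_inner_smul hu, lorentzForm_apply]; ring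

theorem lorentzForm_apply_right_self (hu : ‖u‖ = 1) (x : H) : lorentzForm u x u = ⟪x, u⟫ := by
  simp [lorentzForm_apply, hu]; ring

theorem eq_lorentzForm_apply (hu : ‖u‖ = 1) {B : H → H → ℝ}
    (hB : ∀ (v₁ v₂ : H) (t₁ t₂ : ℝ), ⟪v₁, u⟫ = 0 → ⟪v₂, u⟫ = 0 →
      B (v₁ + t₁ • u) (v₂ + t₂ • u) = t₁ * t₂ - ⟪v₁, v₂⟫) (x y : H) :
    B x y = lorentzForm u x y := by
  have h := hB _ _ ⟪x, u⟫ ⟪y, u⟫ (inner_sub_inner_smul_self hu x) (inner_sub_inner_smul_self hu y)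
  rwa [sub_add_cancel, sub_add_cancel, ← lorentzForm_apply_eq hu] at h

theorem inner_sq_eq_one_add_norm_sq (hu : ‖u‖ = 1) {y : H} (hy : lorentzForm u y y = 1) :
    ⟪y, u⟫ ^ 2 = 1 + ‖y - ⟪y, u⟫ • u‖ ^ 2 := by
  rw [lorentzForm_apply_eq hu, real_inner_self_eq_norm_sq] at hy
  linarith

theorem norm_sq_le_of_lorentzForm_eq_zero (hu : ‖u‖ = 1) {w y : H}
    (hy : lorentzForm u y y = 1) (hwy : lorentzForm u w y = 0) :
    ‖w - ⟪w, u⟫ • u‖ ^ 2 ≤ -lorentzForm u w w * ⟪y, u⟫ ^ 2 := by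
  have hy₀ := inner_sq_eq_one_add_norm_sq hu hy
  have hcs := real_inner_mul_inner_self_le (w - ⟪w, u⟫ • u) (y - ⟪y, u⟫ • u)
  rw [real_inner_self_eq_norm_sq, real_inner_self_eq_norm_sq] at hcs
  rw [lorentzForm_apply_eq hu, sub_eq_zero] at hwy
  rw [← hwy] at hcs
  rw [lorentzForm_apply_eq hu, real_inner_self_eq_norm_sq]
  linear_combination hcs - ‖w - ⟪w, u⟫ • u‖ ^ 2 * hy₀

theorem lorentzForm_self_nonpos_of_lorentzForm_eq_zero (hu : ‖u‖ = 1) {w y : H}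
    (hy : lorentzForm u y y = 1) (hwy : lorentzForm u w y = 0) : lorentzForm u w w ≤ 0 := by
  have h := norm_sq_le_of_lorentzForm_eq_zero hu hy hwy
  have hy₀ := inner_sq_eq_one_add_norm_sq hu hy
  nlinarith [sq_nonneg ‖w - ⟪w, u⟫ • u‖, sq_nonneg ‖y - ⟪y, u⟫ • u‖]

theorem eq_zero_of_lorentzForm_eq_zero (hu : ‖u‖ = 1) {w y : H}
    (hy : lorentzForm u y y = 1) (hwy : lorentzForm u w y = 0) (hww : lorentzForm u w w = 0) :
    w = 0 := by
  have hw₀ : w - ⟪w, u⟫ • u = 0 := by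
    have h := norm_sq_le_of_lorentzForm_eq_zero hu hy hwy
    rw [hww, neg_zero, zero_mul] at h
    exact norm_eq_zero.1 (pow_eq_zero_iff two_ne_zero |>.1 (le_antisymm h (sq_nonneg _)))
  have hwu : ⟪w, u⟫ = 0 := by
    rw [lorentzForm_apply_eq hu, hw₀, inner_zero_left, sub_zero, mul_self_eq_zero] at hww
    exact hww
  rwa [hwu, zero_smul, sub_zero] at hw₀

variable (u) in
def hyperboloid : Set H := {v | lorentzForm u v v = 1 ∧ 0 < ⟪v, u⟫}

theorem one_le_lorentzForm (hu : ‖u‖ = 1) {x y : H} (hx : x ∈ hyperboloid u)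
    (hy : y ∈ hyperboloid u) : 1 ≤ lorentzForm u x y := by
  obtain ⟨hx, hxu⟩ := hx
  obtain ⟨hy, hyu⟩ := hy
  have hx₀ := inner_sq_eq_one_add_norm_sq hu hx
  have hy₀ := inner_sq_eq_one_add_norm_sq hu hy
  set a := ‖x - ⟪x, u⟫ • u‖
  set b := ‖y - ⟪y, u⟫ • u‖
  have hab : 1 + a * b ≤ ⟪x, u⟫ * ⟪y, u⟫ := by
    refine (pow_le_pow_iff_left₀ (by positivity) (by positivity) two_ne_zero).1 ?_
    nlinarith [sq_nonneg (a - b)]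
  rw [lorentzForm_apply_eq hu]
  linarith [real_inner_le_norm (x - ⟪x, u⟫ • u) (y - ⟪y, u⟫ • u)]

theorem lorentzForm_eq_one_iff (hu : ‖u‖ = 1) {x y : H} (hx : x ∈ hyperboloid u)
    (hy : y ∈ hyperboloid u) : lorentzForm u x y = 1 ↔ x = y := by
  refine ⟨fun hxy => ?_, fun hxy => hxy ▸ hx.1⟩
  exact (lorentzForm u).eq_of_apply_eq_one (isSymm_lorentzForm u) hx.1 hy.1 hxy
    fun _ => eq_zero_of_lorentzForm_eq_zero hu hy.1

theorem arcosh_lorentzForm_le_add (hu : ‖u‖ = 1) {x y z : H} (hx : x ∈ hyperboloid u)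
    (hy : y ∈ hyperboloid u) (hz : z ∈ hyperboloid u) :
    Real.arcosh (lorentzForm u x z) ≤
      Real.arcosh (lorentzForm u x y) + Real.arcosh (lorentzForm u y z) :=
  Real.arcosh_le_arcosh_add_arcosh (one_le_lorentzForm hu hx hy) (one_le_lorentzForm hu hy hz)
    (one_pos.trans_le (one_le_lorentzForm hu hx hz)) <|
    (lorentzForm u).apply_le_mul_add_sqrt_mul_sqrt (isSymm_lorentzForm u) hx.1 hy.1 hz.1
      fun _ => lorentzForm_self_nonpos_of_lorentzForm_eq_zero hu hy.1

end Lorentz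

theorem stmt_4_general {H : Type*} [NormedAddCommGroup H] [InnerProductSpace ℝ H]
    (u : H) (hu : ‖u‖ = 1)
    (B : H → H → ℝ)
    (hB : ∀ (v₁ v₂ : H) (t₁ t₂ : ℝ), ⟪v₁, u⟫ = 0 → ⟪v₂, u⟫ = 0 →
      B (v₁ + t₁ • u) (v₂ + t₂ • u) = t₁ * t₂ - ⟪v₁, v₂⟫)
    (S : Set H) (hS : S = {v : H | B v v = 1 ∧ 0 < B v u}) :
    (∀ x ∈ S, ∀ y ∈ S, 1 ≤ B x y) ∧
    (∀ x ∈ S, ∀ y ∈ S, (B x y = 1 ↔ x = y)) ∧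
    (∀ x ∈ S, ∀ y ∈ S, ∀ z ∈ S,
      arcosh (B x z) ≤ arcosh (B x y) + arcosh (B y z)) := by
  have hBL := eq_lorentzForm_apply hu hB
  obtain rfl : S = hyperboloid u := by
    simp only [hS, hBL, lorentzForm_apply_right_self hu, hyperboloid]
  simp only [hBL, arcosh_eq_real_arcosh]
  exact ⟨fun x hx y hy => one_le_lorentzForm hu hx hy,
    fun x hx y hy => lorentzForm_eq_one_iff hu hx hy,
    fun x hx y hy z hz => arcosh_lorentzForm_le_add hu hx hy hz⟩

/-- The infinite-dimensional hyperboloid `{v | B v v = 1, B v u > 0}` with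
`d(x,y) = arcosh (B x y)` is a metric space: `B x y ≥ 1`, with equality iff `x = y`,
and the triangle inequality holds for `arcosh ∘ B`. -/
theorem stmt_4 {H : Type*} [NormedAddCommGroup H] [InnerProductSpace ℝ H] [CompleteSpace H]
    (u : H) (hu : ‖u‖ = 1)
    (B : H → H → ℝ)
    (hB : ∀ (v₁ v₂ : H) (t₁ t₂ : ℝ), ⟪v₁, u⟫ = 0 → ⟪v₂, u⟫ = 0 →
      B (v₁ + t₁ • u) (v₂ + t₂ • u) = t₁ * t₂ - ⟪v₁, v₂⟫)
    (S : Set H) (hS : S = {v : H | B v v = 1 ∧ 0 < B v u}) :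
    (∀ x ∈ S, ∀ y ∈ S, 1 ≤ B x y) ∧
    (∀ x ∈ S, ∀ y ∈ S, (B x y = 1 ↔ x = y)) ∧
    (∀ x ∈ S, ∀ y ∈ S, ∀ z ∈ S,
      arcosh (B x z) ≤ arcosh (B x y) + arcosh (B y z)) :=
  stmt_4_general u hu B hB S hS
end

section
/- For real s and t, with u(s,t) = (1/2π) ∫₀^{2π} |sinh(t) e^{iθ} + cosh(t)|^{−(1+2s)} dθ, one has the second-order expansion u(s,t) = 1 + (1+2s)(s/2 − 1/4) t² + o(t²) as t → 0. -/
/-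
Since `|sinh t · e^{iθ} + cosh t|² = cosh 2t + sinh 2t · cos θ =: g(t, θ)`, the integrand is
`g(t, θ) ^ p` with `p = -(1 + 2s)/2`. The function `g` is positive and, with
`h(t, θ) = sinh 2t + cosh 2t · cos θ`, satisfies `∂ₜg = 2h`, `∂ₜh = 2g`. Differentiating twice under
the integral sign (the derivatives are jointly continuous, hence bounded on compact sets) and using
`g(0, θ) = 1`, `h(0, θ) = cos θ` gives `u(0) = 1`, `u'(0) = 0` and `u''(0) = 2p(p + 1)`; the
expansion is second-order Taylor.
-/

open Filter Function Metric Set Topology Real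

theorem hasDerivAt_intervalIntegral_of_continuous {E : Type*} [NormedAddCommGroup E]
    [NormedSpace ℝ E] {F F' : ℝ → ℝ → E} {a b : ℝ} (hF : ∀ x, Continuous (F x))
    (hF' : Continuous (uncurry F')) (hd : ∀ x θ, HasDerivAt (F · θ) (F' x θ) x) (x₀ : ℝ) :
    HasDerivAt (fun x => ∫ θ in a..b, F x θ) (∫ θ in a..b, F' x₀ θ) x₀ := by
  obtain ⟨C, hC⟩ := ((isCompact_closedBall x₀ 1).prod isCompact_uIcc).exists_bound_of_continuousOn
    hF'.continuousOn
  refine (intervalIntegral.hasDerivAt_integral_of_dominated_loc_of_deriv_le (bound := fun _ => C)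
    (ball_mem_nhds x₀ one_pos) (.of_forall fun x => (hF x).aestronglyMeasurable)
    ((hF x₀).intervalIntegrable a b) (hF'.uncurry_left x₀).aestronglyMeasurable
    (.of_forall fun θ hθ x hx => hC (x, θ) ⟨ball_subset_closedBall hx, uIoc_subset_uIcc hθ⟩)
    intervalIntegrable_const (.of_forall fun θ _ x _ => hd x θ)).2

theorem isLittleO_sub_taylor_two {f f' : ℝ → ℝ} {f'' x₀ : ℝ}
    (hf : ∀ x, HasDerivAt f (f' x) x) (hf' : HasDerivAt f' f'' x₀) :
    (fun x => f x - (f x₀ + f' x₀ * (x - x₀) + f'' / 2 * (x - x₀) ^ 2)) =o[𝓝 x₀]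
      fun x => (x - x₀) ^ 2 := by
  have hq : ∀ x, HasDerivAt (fun x => f x₀ + f' x₀ * (x - x₀) + f'' / 2 * (x - x₀) ^ 2)
      (f' x₀ + f'' * (x - x₀)) x := by
    intro x
    have hlin := (hasDerivAt_id' x).sub_const x₀
    refine (((hlin.const_mul (f' x₀)).const_add (f x₀)).fun_add
      ((hlin.fun_pow 2).const_mul (f'' / 2))).congr_deriv ?_
    ring
  have hφ : ∀ x ∈ univ, HasDerivWithinAt
      (fun x => f x - (f x₀ + f' x₀ * (x - x₀) + f'' / 2 * (x - x₀) ^ 2))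
      (f' x - f' x₀ - f'' * (x - x₀)) univ x := fun x _ =>
    ((hf x).sub (hq x)).hasDerivWithinAt.congr_deriv (by ring)
  have hφ' : (fun x => f' x - f' x₀ - f'' * (x - x₀)) =o[𝓝[univ] x₀] fun x => (x - x₀) ^ 1 := by
    simpa [nhdsWithin_univ, mul_comm] using hasDerivAt_iff_isLittleO.mp hf'
  simpa [nhdsWithin_univ] using Convex.isLittleO_pow_succ_real convex_univ (mem_univ x₀) hφ hφ'

noncomputable def coshSinhCos (t θ : ℝ) : ℝ := cosh (2 * t) + sinh (2 * t) * cos θ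

noncomputable def sinhCoshCos (t θ : ℝ) : ℝ := sinh (2 * t) + cosh (2 * t) * cos θ

theorem hasDerivAt_coshSinhCos (t θ : ℝ) :
    HasDerivAt (coshSinhCos · θ) (2 * sinhCoshCos t θ) t := by
  have h2 := (hasDerivAt_id' t).const_mul (2 : ℝ)
  refine (((hasDerivAt_cosh _).comp t h2).add
    (((hasDerivAt_sinh _).comp t h2).mul_const (cos θ))).congr_deriv ?_
  simp only [sinhCoshCos]
  ring

theorem hasDerivAt_sinhCoshCos (t θ : ℝ) :
    HasDerivAt (sinhCoshCos · θ) (2 * coshSinhCos t θ) t := by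
  have h2 := (hasDerivAt_id' t).const_mul (2 : ℝ)
  refine (((hasDerivAt_sinh _).comp t h2).add
    (((hasDerivAt_cosh _).comp t h2).mul_const (cos θ))).congr_deriv ?_
  simp only [coshSinhCos]
  ring

theorem continuous_coshSinhCos : Continuous (uncurry coshSinhCos) := by
  unfold coshSinhCos; fun_prop

theorem continuous_sinhCoshCos : Continuous (uncurry sinhCoshCos) := by
  unfold sinhCoshCos; fun_prop

theorem coshSinhCos_pos (t θ : ℝ) : 0 < coshSinhCos t θ := by
  have hcos : |sinh (2 * t) * cos θ| ≤ |sinh (2 * t)| :=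
    (abs_mul _ _).trans_le (mul_le_of_le_one_right (abs_nonneg _) (abs_cos_le_one θ))
  have hsinh : |sinh (2 * t)| < cosh (2 * t) := by
    rw [abs_sinh, ← cosh_abs]
    linarith [cosh_sub_sinh |2 * t|, exp_pos (-|2 * t|)]
  unfold coshSinhCos
  linarith [neg_abs_le (sinh (2 * t) * cos θ)]

@[simp] theorem coshSinhCos_zero (θ : ℝ) : coshSinhCos 0 θ = 1 := by simp [coshSinhCos]

@[simp] theorem sinhCoshCos_zero (θ : ℝ) : sinhCoshCos 0 θ = cos θ := by simp [sinhCoshCos]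

theorem norm_sinh_mul_exp_add_cosh_sq (t θ : ℝ) :
    ‖(sinh t : ℂ) * Complex.exp (θ * Complex.I) + (cosh t : ℂ)‖ ^ 2 = coshSinhCos t θ := by
  have hz : (sinh t : ℂ) * Complex.exp (θ * Complex.I) + (cosh t : ℂ)
      = ((sinh t * cos θ + cosh t : ℝ) : ℂ) + ((sinh t * sin θ : ℝ) : ℂ) * Complex.I := by
    rw [Complex.exp_mul_I, ← Complex.ofReal_cos, ← Complex.ofReal_sin]
    push_cast
    ring
  rw [hz, Complex.sq_norm, Complex.normSq_add_mul_I, coshSinhCos, cosh_two_mul, sinh_two_mul]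
  linear_combination sinh t ^ 2 * sin_sq_add_cos_sq θ

theorem continuous_coshSinhCos_rpow (p : ℝ) :
    Continuous (uncurry fun t θ => coshSinhCos t θ ^ p) :=
  continuous_coshSinhCos.rpow_const fun x => Or.inl (coshSinhCos_pos x.1 x.2).ne'

theorem hasDerivAt_coshSinhCos_rpow (p t θ : ℝ) :
    HasDerivAt (coshSinhCos · θ ^ p) (2 * sinhCoshCos t θ * p * coshSinhCos t θ ^ (p - 1)) t :=
  (hasDerivAt_coshSinhCos t θ).rpow_const (Or.inl (coshSinhCos_pos t θ).ne')

theorem hasDerivAt_sinhCoshCos_mul_rpow (p t θ : ℝ) :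
    HasDerivAt (fun t => 2 * sinhCoshCos t θ * p * coshSinhCos t θ ^ (p - 1))
      (2 * (2 * coshSinhCos t θ) * p * coshSinhCos t θ ^ (p - 1) +
        2 * sinhCoshCos t θ * p * (2 * sinhCoshCos t θ * (p - 1) * coshSinhCos t θ ^ (p - 1 - 1)))
      t :=
  (((hasDerivAt_sinhCoshCos t θ).const_mul 2).mul_const p).mul
    (hasDerivAt_coshSinhCos_rpow (p - 1) t θ)

theorem integral_deriv_sinhCoshCos_mul_rpow_zero (p : ℝ) :
    ∫ θ in (0 : ℝ)..2 * π, (2 * (2 * coshSinhCos 0 θ) * p * coshSinhCos 0 θ ^ (p - 1) +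
        2 * sinhCoshCos 0 θ * p * (2 * sinhCoshCos 0 θ * (p - 1) * coshSinhCos 0 θ ^ (p - 1 - 1)))
      = 4 * π * (p * (p + 1)) := by
  have hcos : ∫ θ in (0 : ℝ)..2 * π, cos θ ^ 2 = π := by simp [integral_cos_sq]
  calc _ = ∫ θ in (0 : ℝ)..2 * π, (4 * p + 4 * p * (p - 1) * cos θ ^ 2) := by
        simp only [coshSinhCos_zero, sinhCoshCos_zero, one_rpow, mul_one]
        congr 1 with θ
        ring
    _ = 4 * π * (p * (p + 1)) := by
        rw [intervalIntegral.integral_add (f := fun _ => 4 * p) intervalIntegrable_const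
          (((continuous_cos.fun_pow 2).intervalIntegrable _ _).const_mul (4 * p * (p - 1))),
          intervalIntegral.integral_const_mul (4 * p * (p - 1)), hcos,
          intervalIntegral.integral_const]
        simp only [sub_zero, smul_eq_mul]
        ring

theorem isLittleO_integral_coshSinhCos_rpow_sub (p : ℝ) :
    (fun t => (∫ θ in (0 : ℝ)..2 * π, coshSinhCos t θ ^ p) -
      (2 * π + 2 * π * (p * (p + 1)) * t ^ 2)) =o[𝓝 0] fun t => t ^ 2 := by
  have hcont' :
      Continuous (uncurry fun t θ => 2 * sinhCoshCos t θ * p * coshSinhCos t θ ^ (p - 1)) :=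
    ((continuous_const.mul continuous_sinhCoshCos).mul continuous_const).mul
      (continuous_coshSinhCos_rpow (p - 1))
  have hcont'' : Continuous (uncurry fun t θ =>
      2 * (2 * coshSinhCos t θ) * p * coshSinhCos t θ ^ (p - 1) +
        2 * sinhCoshCos t θ * p *
          (2 * sinhCoshCos t θ * (p - 1) * coshSinhCos t θ ^ (p - 1 - 1))) :=
    (((continuous_const.mul (continuous_const.mul continuous_coshSinhCos)).mul
      continuous_const).mul (continuous_coshSinhCos_rpow (p - 1))).add
      (((continuous_const.mul continuous_sinhCoshCos).mul continuous_const).mul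
        (((continuous_const.mul continuous_sinhCoshCos).mul continuous_const).mul
          (continuous_coshSinhCos_rpow (p - 1 - 1))))
  have hU := fun t => hasDerivAt_intervalIntegral_of_continuous (a := 0) (b := 2 * π)
    (fun x => (continuous_coshSinhCos_rpow p).uncurry_left x) hcont'
    (hasDerivAt_coshSinhCos_rpow p) t
  have hV := hasDerivAt_intervalIntegral_of_continuous (a := 0) (b := 2 * π)
    (fun x => hcont'.uncurry_left x) hcont'' (hasDerivAt_sinhCoshCos_mul_rpow p) 0
  have h := isLittleO_sub_taylor_two hU hV
  have hU0 : ∫ θ in (0 : ℝ)..2 * π, coshSinhCos 0 θ ^ p = 2 * π := by simp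
  have hU'0 :
      ∫ θ in (0 : ℝ)..2 * π, 2 * sinhCoshCos 0 θ * p * coshSinhCos 0 θ ^ (p - 1) = 0 := by
    simp
  rw [hU0, hU'0, integral_deriv_sinhCoshCos_mul_rpow_zero] at h
  simp only [sub_zero] at h
  refine h.congr_left fun t => ?_
  ring

theorem norm_sinh_mul_exp_add_cosh_rpow (t θ r : ℝ) :
    ‖(sinh t : ℂ) * Complex.exp (θ * Complex.I) + (cosh t : ℂ)‖ ^ r =
      coshSinhCos t θ ^ (r / 2) := by
  rw [← norm_sinh_mul_exp_add_cosh_sq, ← rpow_natCast, ← rpow_mul (norm_nonneg _)]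
  congr 1
  push_cast
  ring

/-- Second-order expansion at `t = 0` of
`u(s,t) = (1/2π) ∫₀^{2π} |sinh t · e^{iθ} + cosh t|^{-(1+2s)} dθ`:
`u(s,t) = 1 + (1+2s)(s/2 - 1/4) t² + o(t²)`. -/
theorem stmt_8 (s : ℝ) :
    (fun t : ℝ =>
        (1 / (2 * Real.pi)) *
            (∫ θ in (0 : ℝ)..(2 * Real.pi),
              (‖(Real.sinh t : ℂ) * Complex.exp (θ * Complex.I) +
                (Real.cosh t : ℂ)‖) ^ (-(1 + 2 * s))) -
          (1 + (1 + 2 * s) * (s / 2 - 1 / 4) * t ^ 2)) =o[nhds 0]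
      (fun t : ℝ => t ^ 2) := by
  have h :=
    (isLittleO_integral_coshSinhCos_rpow_sub (-(1 + 2 * s) / 2)).const_mul_left (1 / (2 * π))
  refine h.congr_left fun t => ?_
  simp only [norm_sinh_mul_exp_add_cosh_rpow]
  field_simp
  ring
end

section
/- Let H be a Hilbert space (over ℝ or ℂ) and let T : H → H be an isometry of H that permutes an orthonormal basis (e_x)_{x∈X}, i.e. T e_x = e_{σ(x)} for a permutation σ of X. Suppose P ⊂ H is a 2-dimensional T-invariant subspace on which T acts as a rotation by angle α with α/π irrational. Then P = {0}, i.e. no such nonzero plane exists. Equivalently: if u₁, u₂ ∈ H are orthonormal with T u₁ = cos(α)u₁ + sin(α)u₂ and T u₂ = −sin(α)u₁ + cos(α)u₂ and α/π ∉ ℚ, then u₁ = u₂ = 0. -/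
/-!
Pair the coefficients of `u₁` and `u₂` into the complex number `z x = ⟪e x, u₁⟫ + i ⟪e x, u₂⟫`.
Since `T` preserves inner products, maps `e x` to `e (σ x)` and rotates the plane,
`z (σ x) = exp (i α) * z x`. Along an infinite `σ`-orbit `‖z‖` is therefore constant, although
`z` tends to zero because it is square-summable; on a finite orbit of length `n`,
`exp (i n α) = 1` would make `α / π` rational. Hence every coefficient vanishes.
-/

section

open Complex Filter Function Topology

section Orbit

variable {𝕜 X : Type*} [NormedField 𝕜] {f : X → X} {z : X → 𝕜} {w : 𝕜}

lemma apply_iterate_eq_pow_mul (h : ∀ x, z (f x) = w * z x) (k : ℕ) (x : X) :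
    z (f^[k] x) = w ^ k * z x := by
  induction k with
  | zero => simp
  | succ k ih => rw [iterate_succ_apply', h, ih, pow_succ', mul_assoc]

theorem eq_zero_of_apply_eq_mul_of_not_isOfFinOrder (hf : Injective f) (hw : ‖w‖ = 1)
    (hw_ord : ¬IsOfFinOrder w) (hz : Tendsto z cofinite (𝓝 0)) (h : ∀ x, z (f x) = w * z x) :
    z = 0 := by
  funext x
  by_cases horbit : Injective (f^[·] x)
  · have hlim : Tendsto (fun k : ℕ => ‖z (f^[k] x)‖) atTop (𝓝 0) := by
      rw [← Nat.cofinite_eq_atTop]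
      simpa using (hz.comp horbit.tendsto_cofinite).norm
    simp only [apply_iterate_eq_pow_mul h, norm_mul, norm_pow, hw, one_pow, one_mul] at hlim
    exact norm_eq_zero.mp (tendsto_nhds_unique tendsto_const_nhds hlim)
  · obtain ⟨m, n, heq, hne⟩ : ∃ m n, f^[m] x = f^[n] x ∧ m ≠ n := by
      simpa [Injective] using horbit
    wlog hlt : n < m generalizing m n
    · exact this n m heq.symm hne.symm (by omega)
    have hper : w ^ (m - n) * z x = 1 * z x := by
      rw [← apply_iterate_eq_pow_mul h, iterate_cancel hf heq, one_mul]
    by_contra hx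
    exact hw_ord (isOfFinOrder_iff_pow_eq_one.mpr ⟨m - n, by omega, mul_right_cancel₀ hx hper⟩)

end Orbit

lemma not_isOfFinOrder_exp_mul_I {α : ℝ} (hα : Irrational (α / Real.pi)) :
    ¬IsOfFinOrder (exp (α * I)) := by
  intro hfin
  obtain ⟨n, hn, hpow⟩ := isOfFinOrder_iff_pow_eq_one.mp hfin
  obtain ⟨m, hm⟩ := exp_eq_one_iff.mp (by rwa [← exp_nat_mul] at hpow)
  have hnα : ((n * α : ℝ) : ℂ) = (m * (2 * Real.pi) : ℝ) := by
    apply mul_right_cancel₀ I_ne_zero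
    push_cast
    linear_combination hm
  replace hnα := ofReal_injective hnα
  refine hα ⟨2 * m / n, ?_⟩
  push_cast
  field_simp
  linarith

section HilbertBasis

variable {𝕜 E X : Type*} [RCLike 𝕜] [NormedAddCommGroup E] [InnerProductSpace 𝕜 E]

lemma HilbertBasis.tendsto_inner_cofinite (e : HilbertBasis X 𝕜 E) (u : E) :
    Tendsto (fun x => inner 𝕜 (e x) u) cofinite (𝓝 0) := by
  have hterms := (e.hasSum_repr u).summable.tendsto_cofinite_zero
  rw [tendsto_zero_iff_norm_tendsto_zero] at hterms ⊢
  simpa [norm_smul, e.orthonormal.1, e.repr_apply_apply] using hterms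

lemma HilbertBasis.eq_zero_of_forall_inner_eq_zero (e : HilbertBasis X 𝕜 E) {u : E}
    (h : ∀ x, inner 𝕜 (e x) u = 0) : u = 0 := by
  refine e.repr.map_eq_zero_iff.mp ?_
  ext x
  simp [e.repr_apply_apply, h x]

end HilbertBasis

variable {H : Type*} [NormedAddCommGroup H] [InnerProductSpace ℝ H]

/-- For orthonormal `u₁, u₂`, the orthogonal projection of `v` onto their span, read in the
complex coordinate `u₁ ↦ 1`, `u₂ ↦ i`. -/
def planeCoord (u₁ u₂ v : H) : ℂ := ⟨inner ℝ v u₁, inner ℝ v u₂⟩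

lemma planeCoord_map (T : H →ₗᵢ[ℝ] H) {α : ℝ} {u₁ u₂ : H}
    (h1 : T u₁ = Real.cos α • u₁ + Real.sin α • u₂)
    (h2 : T u₂ = -Real.sin α • u₁ + Real.cos α • u₂) (v : H) :
    planeCoord u₁ u₂ (T v) = exp (α * I) * planeCoord u₁ u₂ v := by
  have hc : inner ℝ v u₁ = Real.cos α * inner ℝ (T v) u₁ + Real.sin α * inner ℝ (T v) u₂ := by
    rw [← T.inner_map_map, h1, inner_add_right, real_inner_smul_right, real_inner_smul_right]
  have hd : inner ℝ v u₂ = -Real.sin α * inner ℝ (T v) u₁ + Real.cos α * inner ℝ (T v) u₂ := by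
    rw [← T.inner_map_map, h2, inner_add_right, real_inner_smul_right, real_inner_smul_right]
  apply Complex.ext <;>
    simp only [planeCoord, mul_re, mul_im, exp_ofReal_mul_I_re, exp_ofReal_mul_I_im, hc, hd]
  · linear_combination -inner ℝ (T v) u₁ * Real.sin_sq_add_cos_sq α
  · linear_combination -inner ℝ (T v) u₂ * Real.sin_sq_add_cos_sq α

lemma HilbertBasis.tendsto_planeCoord_cofinite {X : Type*} (e : HilbertBasis X ℝ H) (u₁ u₂ : H) :
    Tendsto (fun x => planeCoord u₁ u₂ (e x)) cofinite (𝓝 0) := by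
  have h := (e.tendsto_inner_cofinite u₁).prodMk_nhds (e.tendsto_inner_cofinite u₂)
  rw [← map_zero equivRealProdCLM.symm]
  exact (equivRealProdCLM.symm.continuous.tendsto _).comp h

end

theorem stmt_10_general {H : Type*} [NormedAddCommGroup H] [InnerProductSpace ℝ H] [CompleteSpace H]
    {X : Type*} (e : HilbertBasis X ℝ H)
    (T : H ≃ₗᵢ[ℝ] H) (σ : Equiv.Perm X) (hT : ∀ x : X, T (e x) = e (σ x))
    (α : ℝ) (hα : Irrational (α / Real.pi))
    (u₁ u₂ : H)
    (h1 : T u₁ = Real.cos α • u₁ + Real.sin α • u₂)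
    (h2 : T u₂ = -Real.sin α • u₁ + Real.cos α • u₂) :
    u₁ = 0 ∧ u₂ = 0 := by
  have hrot : ∀ x, planeCoord u₁ u₂ (e (σ x)) =
      Complex.exp (α * Complex.I) * planeCoord u₁ u₂ (e x) := by
    intro x
    rw [← hT]
    exact planeCoord_map T.toLinearIsometry h1 h2 (e x)
  have hzero := eq_zero_of_apply_eq_mul_of_not_isOfFinOrder (z := fun x => planeCoord u₁ u₂ (e x))
    σ.injective (Complex.norm_exp_ofReal_mul_I α) (not_isOfFinOrder_exp_mul_I hα)
    (e.tendsto_planeCoord_cofinite u₁ u₂) hrot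
  exact ⟨e.eq_zero_of_forall_inner_eq_zero fun x => congrArg Complex.re (congrFun hzero x),
    e.eq_zero_of_forall_inner_eq_zero fun x => congrArg Complex.im (congrFun hzero x)⟩

/-- If an isometry `T` of a Hilbert space permutes an orthonormal (Hilbert) basis and
admits orthonormal vectors `u₁, u₂` spanning a `T`-invariant plane on which `T` acts as a
rotation by an angle `α` with `α/π` irrational, then `u₁ = u₂ = 0`
(i.e. no such nonzero plane exists). -/
theorem stmt_10 {H : Type*} [NormedAddCommGroup H] [InnerProductSpace ℝ H] [CompleteSpace H]
    {X : Type*} (e : HilbertBasis X ℝ H)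
    (T : H ≃ₗᵢ[ℝ] H) (σ : Equiv.Perm X) (hT : ∀ x : X, T (e x) = e (σ x))
    (α : ℝ) (hα : Irrational (α / Real.pi))
    (u₁ u₂ : H) (hu : Orthonormal ℝ ![u₁, u₂])
    (h1 : T u₁ = Real.cos α • u₁ + Real.sin α • u₂)
    (h2 : T u₂ = -Real.sin α • u₁ + Real.cos α • u₂) :
    u₁ = 0 ∧ u₂ = 0 :=
  stmt_10_general e T σ hT α hα u₁ u₂ h1 h2
end
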